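/- arXiv:0905.1930 — 4 statements merged into one kernel-verified Lean document; each statement's English description precedes it below -/
import Mathlib

section
/- Let a, b, c, s be real numbers satisfying the three equations (a+b-1)s = (a-3)c + 2a, (a+b-1)a = (c-1)c, and (a-3)a = (c-3)s. Then c = s = a and ab = 0. -/
/-!
The combination `a·h₁ - s·h₂ + c·h₃` of the three equations collapses to `2(cs - a²) = 0`.
Substituting `cs = a²` into the third equation leaves `3s = 3a`, and with `s = a` the
difference of the first two equations factors as `(c - a)(c + 2) = 0`. The branch `c = -2`
forces `a² = -2a`, and `a = 0` is then excluded by the second equation, which would read `0 = 6`.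
-/

theorem sub_mul_add_two_eq_zero_of_system {R : Type*} [CommRing R] {a b c s : R}
    (h1 : (a + b - 1) * s = (a - 3) * c + 2 * a)
    (h2 : (a + b - 1) * a = (c - 1) * c) (hs : s = a) :
    (c - a) * (c + 2) = 0 := by
  linear_combination h1 - h2 - (a + b - 1) * hs

section PolynomialSystem

variable {K : Type*} [Field K] [CharZero K] {a b c s : K}

theorem mul_eq_sq_of_system (h1 : (a + b - 1) * s = (a - 3) * c + 2 * a)
    (h2 : (a + b - 1) * a = (c - 1) * c) (h3 : (a - 3) * a = (c - 3) * s) :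
    c * s = a ^ 2 := by
  linear_combination (a / 2) * h1 - (s / 2) * h2 + (c / 2) * h3

theorem eq_of_mul_eq_sq (h3 : (a - 3) * a = (c - 3) * s) (hcs : c * s = a ^ 2) : s = a := by
  linear_combination (1 / 3) * h3 + (1 / 3) * hcs

theorem eq_of_system (h1 : (a + b - 1) * s = (a - 3) * c + 2 * a)
    (h2 : (a + b - 1) * a = (c - 1) * c) (h3 : (a - 3) * a = (c - 3) * s) :
    c = a ∧ s = a := by
  have hcs := mul_eq_sq_of_system h1 h2 h3
  have hs := eq_of_mul_eq_sq h3 hcs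
  refine ⟨?_, hs⟩
  rcases mul_eq_zero.mp (sub_mul_add_two_eq_zero_of_system h1 h2 hs) with hca | hc
  · exact sub_eq_zero.mp hca
  · have hc : c = -2 := eq_neg_of_add_eq_zero_left hc
    have ha : a * (a + 2) = 0 := by linear_combination -hcs + s * hc - 2 * hs
    rcases mul_eq_zero.mp ha with ha | ha
    · subst ha hc
      norm_num at h2
    · linear_combination hc - ha

end PolynomialSystem

/-- If reals `a, b, c, s` satisfy `(a+b-1)s = (a-3)c + 2a`, `(a+b-1)a = (c-1)c`
and `(a-3)a = (c-3)s`, then `c = s = a` and `ab = 0`. -/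
theorem polynomial_system_solution
    (a b c s : ℝ)
    (h1 : (a + b - 1) * s = (a - 3) * c + 2 * a)
    (h2 : (a + b - 1) * a = (c - 1) * c)
    (h3 : (a - 3) * a = (c - 3) * s) :
    c = a ∧ s = a ∧ a * b = 0 := by
  obtain ⟨hc, hs⟩ := eq_of_system h1 h2 h3
  exact ⟨hc, hs, by linear_combination h2 + (c + a - 1) * hc⟩
end

section
/- Let μ : ℝ → ℝ be a differentiable function defined on all of ℝ satisfying μ'(s) = μ(s)² for every s ∈ ℝ. Then μ is identically zero. -/
/-!
Where `μ ≠ 0`, the substitution `w = 1 / μ` turns `μ' = μ²` into `w' = -1`, so a solution that is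
positive somewhere blows up in finite forward time. Since `t ↦ -μ (-t)` solves the same equation,
a negative value blows up in finite backward time. A global solution therefore never leaves `0`.
-/

open Set

lemma HasDerivAt.inv_of_hasDerivAt_sq {f : ℝ → ℝ} {x : ℝ} (hf : HasDerivAt f (f x ^ 2) x)
    (hx : f x ≠ 0) : HasDerivAt (fun s => (f s)⁻¹) (-1) x := by
  simpa [hx, Pi.inv_def] using hf.inv hx

lemma inv_eq_inv_sub_of_hasDerivAt_sq {f : ℝ → ℝ} {a b : ℝ}
    (hf : ∀ s ∈ Icc a b, HasDerivAt f (f s ^ 2) s) (hne : ∀ s ∈ Icc a b, f s ≠ 0) :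
    ∀ s ∈ Icc a b, (f s)⁻¹ = (f a)⁻¹ - (s - a) := by
  have hinv (s : ℝ) (hs : s ∈ Icc a b) : HasDerivAt (fun s => (f s)⁻¹) (-1) s :=
    (hf s hs).inv_of_hasDerivAt_sq (hne s hs)
  refine eq_of_has_deriv_right_eq (f' := fun _ => -1)
    (fun s hs => (hinv s (Ico_subset_Icc_self hs)).hasDerivWithinAt)
    (fun s _ => by simpa using ((hasDerivAt_id s).sub_const a).const_sub _ |>.hasDerivWithinAt)
    (fun s hs => (hinv s hs).continuousAt.continuousWithinAt) (by fun_prop) (by simp)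

lemma nonpos_of_hasDerivAt_sq {μ : ℝ → ℝ} (hμ : ∀ s, HasDerivAt μ (μ s ^ 2) s) (a : ℝ) :
    μ a ≤ 0 := by
  by_contra! ha
  have hmono : Monotone μ := monotone_of_hasDerivAt_nonneg hμ fun s => sq_nonneg (μ s)
  set b := a + (μ a)⁻¹
  have hpos : ∀ s ∈ Icc a b, 0 < μ s := fun s hs => ha.trans_le (hmono hs.1)
  have hb : b ∈ Icc a b := right_mem_Icc.mpr (le_add_of_nonneg_right (inv_nonneg.mpr ha.le))
  have hzero : (μ b)⁻¹ = 0 := by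
    rw [inv_eq_inv_sub_of_hasDerivAt_sq (fun s _ => hμ s) (fun s hs => (hpos s hs).ne') b hb]
    simp [b]
  exact (inv_pos.mpr (hpos b hb)).ne' hzero

lemma hasDerivAt_neg_comp_neg_of_hasDerivAt_sq {μ : ℝ → ℝ} (hμ : ∀ s, HasDerivAt μ (μ s ^ 2) s)
    (s : ℝ) : HasDerivAt (fun t => -μ (-t)) ((-μ (-s)) ^ 2) s := by
  simpa [Function.comp_def, Pi.neg_def] using ((hμ (-s)).comp s (hasDerivAt_neg s)).neg

/-- A globally defined differentiable solution `μ : ℝ → ℝ` of the ODE `μ' = μ²`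
is identically zero. -/
theorem global_solution_of_riccati_is_zero
    (μ : ℝ → ℝ) (hdiff : ∀ s : ℝ, HasDerivAt μ ((μ s) ^ 2) s) :
    ∀ s : ℝ, μ s = 0 := by
  intro s
  have hreflect : -μ (-(-s)) ≤ 0 :=
    nonpos_of_hasDerivAt_sq (hasDerivAt_neg_comp_neg_of_hasDerivAt_sq hdiff) (-s)
  rw [neg_neg] at hreflect
  exact le_antisymm (nonpos_of_hasDerivAt_sq hdiff s) (neg_nonpos.mp hreflect)
end

section
/- Let ∇ be a torsion-free connection on a surface Σ whose Ricci tensor ρ is skew-symmetric and nonzero at every point, let φ be the recurrence 1-form defined by ∇ρ = φ⊗ρ, and let w be the vector field with φ = ρ(w,·). Then for every vector field v on Σ, d[ρ(v,·)] = [div v + φ(v)]·ρ, and in particular div w = 2 (using φ(w)=0 and dφ = 2ρ). -/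
open scoped BigOperators

noncomputable section

/-- The surface, presented in a global coordinate chart. -/
abbrev Surf := Fin 2 → ℝ

/-- Partial derivative in coordinate direction `j`. -/
def pd (j : Fin 2) (f : Surf → ℝ) (x : Surf) : ℝ :=
  fderiv ℝ f x (Pi.single j 1)

/-- Components of the covariant derivative `∇ρ` of a 2-tensor `ρ`:
`ρ_{jk,l} = ∂_l ρ_{jk} - Γ^s_{lj} ρ_{sk} - Γ^s_{lk} ρ_{js}`
(`Γ x j k l` denotes `Γ^l_{jk}`). -/
def covTwoTensor (Γ : Surf → Fin 2 → Fin 2 → Fin 2 → ℝ)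
    (ρ : Surf → Fin 2 → Fin 2 → ℝ) (x : Surf) (l j k : Fin 2) : ℝ :=
  pd l (fun y => ρ y j k) x - ∑ s, Γ x l j s * ρ x s k - ∑ s, Γ x l k s * ρ x j s

/-- Divergence of a vector field: `div v = ∂_k v^k + Γ^k_{ks} v^s`. -/
def divVF (Γ : Surf → Fin 2 → Fin 2 → Fin 2 → ℝ)
    (v : Surf → Fin 2 → ℝ) (x : Surf) : ℝ :=
  ∑ k, (pd k (fun y => v y k) x + ∑ s, Γ x k s k * v x s)

/-- Exterior derivative of a 1-form: `(dβ)_{jk} = ∂_j β_k - ∂_k β_j`. -/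
def dOneForm (β : Surf → Fin 2 → ℝ) (x : Surf) (j k : Fin 2) : ℝ :=
  pd j (fun y => β y k) x - pd k (fun y => β y j) x

lemma pd_mul (l : Fin 2) (f g : Surf → ℝ) (hf : ContDiff ℝ (⊤ : ℕ∞) f) (hg : ContDiff ℝ (⊤ : ℕ∞) g)
    (x : Surf) : pd l (fun y => f y * g y) x = pd l f x * g x + f x * pd l g x := by
  unfold pd
  rw [fderiv_fun_mul (hf.differentiable (by simp) x) (hg.differentiable (by simp) x)]
  simp
  ring

lemma pd_neg (l : Fin 2) (f : Surf → ℝ) (x : Surf) :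
    pd l (fun y => -(f y)) x = -pd l f x := by
  unfold pd
  rw [fderiv_fun_neg]
  simp

/-- Let `∇` be a torsion-free connection on a surface whose Ricci tensor `ρ` is
skew-symmetric and nonzero at every point, let `φ` be the recurrence 1-form with
`∇ρ = φ⊗ρ`, and `w` the vector field with `φ = ρ(w,·)`, with `dφ = 2ρ`. Then for
every vector field `v`, `d[ρ(v,·)] = [div v + φ(v)]·ρ`, and `div w = 2`. -/
theorem divergence_identity_rsts
    (Γ : Surf → Fin 2 → Fin 2 → Fin 2 → ℝ)
    (hΓsmooth : ∀ j k l, ContDiff ℝ (⊤ : ℕ∞) fun x => Γ x j k l)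
    (htf : ∀ x j k l, Γ x j k l = Γ x k j l)
    (ρ : Surf → Fin 2 → Fin 2 → ℝ)
    (hρsmooth : ∀ j k, ContDiff ℝ (⊤ : ℕ∞) fun x => ρ x j k)
    (hskew : ∀ x j k, ρ x j k = -ρ x k j)
    (hnz : ∀ x, ∃ j k, ρ x j k ≠ 0)
    (φ : Surf → Fin 2 → ℝ)
    (hφsmooth : ∀ k, ContDiff ℝ (⊤ : ℕ∞) fun x => φ x k)
    (hrec : ∀ x l j k, covTwoTensor Γ ρ x l j k = φ x l * ρ x j k)
    (w : Surf → Fin 2 → ℝ)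
    (hwsmooth : ∀ k, ContDiff ℝ (⊤ : ℕ∞) fun x => w x k)
    (hφw : ∀ x k, φ x k = ∑ j, w x j * ρ x j k)
    (hdφ : ∀ x j k, dOneForm φ x j k = 2 * ρ x j k) :
    (∀ v : Surf → Fin 2 → ℝ, (∀ k, ContDiff ℝ (⊤ : ℕ∞) fun x => v x k) →
      ∀ x j k, dOneForm (fun y k' => ∑ j', v y j' * ρ y j' k') x j k
        = (divVF Γ v x + ∑ s, φ x s * v x s) * ρ x j k) ∧
    (∀ x, divVF Γ w x = 2) := by
  have hzz : ∀ x j, ρ x j j = 0 := fun x j => by have := hskew x j j; linarith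
  have hdr : ∀ x l, pd l (fun y => ρ y 0 1) x
      = (φ x l + Γ x l 0 0 + Γ x l 1 1) * ρ x 0 1 := by
    intro x l
    have h := hrec x l 0 1
    simp only [covTwoTensor, Fin.sum_univ_two, hzz, mul_zero, add_zero, zero_add] at h
    linear_combination h
  have key : ∀ (v : Surf → Fin 2 → ℝ), (∀ k, ContDiff ℝ (⊤ : ℕ∞) fun x => v x k) →
      ∀ x, dOneForm (fun y k' => ∑ j', v y j' * ρ y j' k') x 0 1
        = (divVF Γ v x + ∑ s, φ x s * v x s) * ρ x 0 1 := by
    intro v hv x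
    have hβ1 : (fun y => ∑ j', v y j' * ρ y j' 1) = fun y => v y 0 * ρ y 0 1 := by
      funext y; rw [Fin.sum_univ_two, hzz, mul_zero, add_zero]
    have hβ0 : (fun y => ∑ j', v y j' * ρ y j' 0) = fun y => -(v y 1 * ρ y 0 1) := by
      funext y; rw [Fin.sum_univ_two, hzz, mul_zero, zero_add, hskew y 1 0]; ring
    simp only [dOneForm]
    rw [hβ1, hβ0, pd_neg, pd_mul 0 _ _ (hv 0) (hρsmooth 0 1),
      pd_mul 1 _ _ (hv 1) (hρsmooth 0 1), hdr, hdr]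
    simp only [divVF, Fin.sum_univ_two]
    rw [htf x 0 1 1, htf x 1 0 0]
    ring
  refine ⟨?_, ?_⟩
  · intro v hv x j k
    have hj : j = 0 ∨ j = 1 := by omega
    have hk : k = 0 ∨ k = 1 := by omega
    rcases hj with rfl | rfl <;> rcases hk with rfl | rfl
    · simp [dOneForm, hzz]
    · exact key v hv x
    · have h := key v hv x
      simp only [dOneForm] at h ⊢
      rw [hskew x 1 0]
      linear_combination -h
    · simp [dOneForm, hzz]
  · intro x
    have h := key w hwsmooth x
    have hfun : (fun y k' => ∑ j', w y j' * ρ y j' k') = φ := by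
      funext y k'; exact (hφw y k').symm
    rw [hfun, hdφ x 0 1] at h
    have hφw0 : (∑ s, φ x s * w x s) = 0 := by
      simp only [Fin.sum_univ_two, hφw, hzz, hskew x 1 0]
      ring
    rw [hφw0, add_zero] at h
    have hne : ρ x 0 1 ≠ 0 := by
      intro h0
      have h10 : ρ x 1 0 = 0 := by rw [hskew x 1 0, h0, neg_zero]
      obtain ⟨j, k, hjk⟩ := hnz x
      apply hjk
      have hj : j = 0 ∨ j = 1 := by omega
      have hk : k = 0 ∨ k = 1 := by omega
      rcases hj with rfl | rfl <;> rcases hk with rfl | rfl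
      · exact hzz x 0
      · exact h0
      · exact h10
      · exact hzz x 1
    exact mul_right_cancel₀ hne (h.symm)
end
end

section
/- Let ∇ be a torsion-free connection on a surface with everywhere-nonzero skew-symmetric Ricci tensor ρ, recurrence 1-form φ (∇ρ = φ⊗ρ) and vector field w (φ = ρ(w,·), φ(w) = 0). Suppose on an open set the connection satisfies the structure equations (in a frame u,w with [u,w] = 2u): ∇_u u = (3+a)u - aw, ∇_u w = au + (3-a)w, ∇_w u = (a-2)u + (3-a)w, ∇_w w = (a+b-1)u + (2-a)w with ab = 0 and a+b ≠ 1. If w → 0 along a sequence of points, then also u → 0 along that sequence, contradicting ρ(u,w) = 6; hence w is nonzero at every point of the closure of the open set. -/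
open scoped BigOperators

noncomputable section

/-- The covariant derivative `(∇_u v)^l = u^j (∂_j v^l + Γ^l_{js} v^s)`. -/
def covVF (Γ : Surf → Fin 2 → Fin 2 → Fin 2 → ℝ)
    (u v : Surf → Fin 2 → ℝ) (x : Surf) (l : Fin 2) : ℝ :=
  ∑ j, u x j * (pd j (fun y => v y l) x + ∑ s, Γ x j s l * v x s)

/-- The Lie bracket of vector fields in coordinates. -/
def bracketVF (u v : Surf → Fin 2 → ℝ) (x : Surf) (l : Fin 2) : ℝ :=
  ∑ j, (u x j * pd j (fun y => v y l) x - v x j * pd j (fun y => u y l) x)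

/-- Let `∇` be a torsion-free connection on a surface with everywhere-nonzero
skew-symmetric Ricci tensor `ρ`, recurrence 1-form `φ` (`∇ρ = φ⊗ρ`) and vector
field `w` (`φ = ρ(w,·)`).  Suppose that on a nonempty open set `U` there is a
vector field `u`, pointwise linearly independent from `w`, such that in the frame
`u, w` (with `[u,w] = 2u` and `ρ(u,w) = 6`) the connection satisfies the structure
equations (nuu) with constants `a, b`, `ab = 0`, `a + b ≠ 1`.  Then `w` is nonzero
at every point of the closure of `U`. -/
theorem w_nonzero_on_closure
    (Γ : Surf → Fin 2 → Fin 2 → Fin 2 → ℝ)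
    (hΓsmooth : ∀ j k l, ContDiff ℝ (⊤ : ℕ∞) fun x => Γ x j k l)
    (htf : ∀ x j k l, Γ x j k l = Γ x k j l)
    (ρ : Surf → Fin 2 → Fin 2 → ℝ)
    (hρsmooth : ∀ j k, ContDiff ℝ (⊤ : ℕ∞) fun x => ρ x j k)
    (hskew : ∀ x j k, ρ x j k = -ρ x k j)
    (hnz : ∀ x, ∃ j k, ρ x j k ≠ 0)
    (φ : Surf → Fin 2 → ℝ)
    (hφsmooth : ∀ k, ContDiff ℝ (⊤ : ℕ∞) fun x => φ x k)
    (hrec : ∀ x l j k, covTwoTensor Γ ρ x l j k = φ x l * ρ x j k)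
    (w : Surf → Fin 2 → ℝ)
    (hwsmooth : ∀ k, ContDiff ℝ (⊤ : ℕ∞) fun x => w x k)
    (hφw : ∀ x k, φ x k = ∑ j, w x j * ρ x j k)
    (a b : ℝ) (hab : a * b = 0) (hab1 : a + b ≠ 1)
    (U : Set Surf) (hopen : IsOpen U) (hne : U.Nonempty)
    (u : Surf → Fin 2 → ℝ)
    (husmooth : ∀ k, ContDiffOn ℝ (⊤ : ℕ∞) (fun x => u x k) U)
    (hindep : ∀ x ∈ U, LinearIndependent ℝ ![u x, w x])
    (hbr : ∀ x ∈ U, ∀ l, bracketVF u w x l = 2 * u x l)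
    (hρuw : ∀ x ∈ U, ∑ j, ∑ k, u x j * w x k * ρ x j k = 6)
    (huu : ∀ x ∈ U, ∀ l, covVF Γ u u x l = (3 + a) * u x l - a * w x l)
    (huw : ∀ x ∈ U, ∀ l, covVF Γ u w x l = a * u x l + (3 - a) * w x l)
    (hwu : ∀ x ∈ U, ∀ l, covVF Γ w u x l = (a - 2) * u x l + (3 - a) * w x l)
    (hww : ∀ x ∈ U, ∀ l,
      covVF Γ w w x l = (a + b - 1) * u x l + (2 - a) * w x l) :
    ∀ x ∈ closure U, w x ≠ 0 := by

  -- extend `u` continuously via the structure equation `∇_w w = (a+b-1)u + (2-a)w`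
  have hab1' : a + b - 1 ≠ 0 := sub_ne_zero.mpr hab1
  set u' : Surf → Fin 2 → ℝ :=
    fun x j => (covVF Γ w w x j - (2 - a) * w x j) / (a + b - 1) with hu'
  set f : Surf → ℝ :=
    fun x => ∑ j, ∑ k, u' x j * w x k * ρ x j k with hf
  have hpd : ∀ (i l : Fin 2), Continuous fun x => pd i (fun y => w y l) x := by
    intro i l
    exact ((hwsmooth l).continuous_fderiv (by simp)).clm_apply continuous_const
  have hcov : ∀ l, Continuous fun x => covVF Γ w w x l := by
    intro l
    unfold covVF
    apply continuous_finset_sum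
    intro j _
    exact (hwsmooth j).continuous.mul ((hpd j l).add (continuous_finset_sum _
      fun s _ => (hΓsmooth j s l).continuous.mul (hwsmooth s).continuous))
  have hfc : Continuous f := by
    apply continuous_finset_sum
    intro j _
    apply continuous_finset_sum
    intro k _
    exact ((((hcov j).sub (continuous_const.mul (hwsmooth j).continuous)).div_const _).mul
      (hwsmooth k).continuous).mul (hρsmooth j k).continuous
  have hU6 : ∀ x ∈ U, f x = 6 := by
    intro x hx
    have hu'eq : ∀ j, u' x j = u x j := by
      intro j
      rw [hu']
      simp only
      rw [hww x hx j]
      field_simp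
      ring
    simp only [hf, hu'eq]
    exact hρuw x hx
  have hcl6 : ∀ x ∈ closure U, f x = 6 := by
    have : closure U ⊆ {x | f x = 6} := by
      apply closure_minimal _ (isClosed_eq hfc continuous_const)
      exact hU6
    exact this
  intro x hx hw0
  have h6 := hcl6 x hx
  have hzero : f x = 0 := by
    simp only [hf]
    apply Finset.sum_eq_zero
    intro j _
    apply Finset.sum_eq_zero
    intro k _
    have : w x k = 0 := by rw [hw0]; rfl
    rw [this]
    ring
  rw [hzero] at h6
  norm_num at h6
end
end
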